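/- arXiv:2108.13631 — 8 statements merged into one kernel-verified Lean document; each statement's English description precedes it below -/
import Mathlib

section
/- For every natural number $n$, the identity of polynomials $V_n(x) = \frac{2^{n}}{\binom{2n}{n}} \sum_{m=0}^{n} (-1)^{n-m} \Big( \sum_{l=0}^{n-m} 2^{l} \frac{(1+n)_{n-l}\,(\tfrac{1}{2}-n)_{l}}{(n-l-m)!\, m!\, l!} \Big) x^m$ holds in $\mathbb{R}[x]$. -/
open Polynomial Finset

/-- The Jacobi polynomial `P_n^{(a,b)}`, defined by
`P_n^{(a,b)}(z) = ∑_{l=0}^n (n+a+b+1)_l (a+l+1)_{n-l} / (l! (n-l)!) ((z-1)/2)^l`. -/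
noncomputable def jacobiP (a b : ℝ) (n : ℕ) : ℝ[X] :=
  ∑ l ∈ range (n + 1),
    C (((ascPochhammer ℝ l).eval ((n : ℝ) + a + b + 1) *
        (ascPochhammer ℝ (n - l)).eval (a + l + 1)) /
       (l.factorial * (n - l).factorial)) * (C (1 / 2) * (X - 1)) ^ l

/-- The Chebyshev polynomial of the third kind, `V_n(x) = 2^{2n}/C(2n,n) ⬝ P_n^{(-1/2,1/2)}(x)`. -/
noncomputable def chebV (n : ℕ) : ℝ[X] :=
  C ((2 : ℝ) ^ (2 * n) / ((2 * n).choose n : ℝ)) * jacobiP (-(1 / 2)) (1 / 2) n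

/-- The Chebyshev polynomial of the fourth kind, `W_n(x) = 2^{2n}/C(2n,n) ⬝ P_n^{(1/2,-1/2)}(x)`. -/
noncomputable def chebW (n : ℕ) : ℝ[X] :=
  C ((2 : ℝ) ^ (2 * n) / ((2 * n).choose n : ℝ)) * jacobiP (1 / 2) (-(1 / 2)) n

/-! Expand each `((x - 1) / 2)^l` of the Jacobi sum binomially, exchange the two finite sums and
reindex by `k = n - l`; the coefficients then match after the reflection
`(1/2 - n)_k = (-1)^k (n - k + 1/2)_k` of the Pochhammer symbol. -/

theorem ascPochhammer_eval_neg_eq_ascPochhammer {R : Type*} [Ring R] (r : R) (k : ℕ) :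
    (ascPochhammer R k).eval (-r) = (-1) ^ k * (ascPochhammer R k).eval (r - k + 1) := by
  rw [ascPochhammer_eval_neg_eq_descPochhammer, descPochhammer_eval_eq_ascPochhammer]

theorem Finset.sum_range_sum_range_comm_reflect {M : Type*} [AddCommMonoid M] (n : ℕ)
    (f : ℕ → ℕ → M) :
    ∑ l ∈ range (n + 1), ∑ m ∈ range (l + 1), f l m
      = ∑ m ∈ range (n + 1), ∑ k ∈ range (n - m + 1), f (n - k) m := by
  rw [sum_sigma', sum_sigma']
  refine sum_nbij' (fun x ↦ ⟨x.2, n - x.1⟩) (fun x ↦ ⟨n - x.2, x.1⟩) ?_ ?_ ?_ ?_ ?_ <;>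
    rintro ⟨i, j⟩ h <;>
    simp only [mem_sigma, mem_range, Sigma.mk.injEq, heq_eq_eq, true_and, and_true] at h ⊢
  all_goals first
    | omega
    | rw [show n - (n - i) = i by omega]

theorem Polynomial.sum_C_mul_X_sub_one_pow {R : Type*} [CommRing R] (n : ℕ) (c : ℕ → R) :
    ∑ l ∈ range (n + 1), C (c l) * (X - 1) ^ l
      = ∑ m ∈ range (n + 1),
          C (∑ k ∈ range (n - m + 1), (-1) ^ (n - k - m) * c (n - k) * (n - k).choose m) * X ^ m := by
  simp only [sub_pow, mul_sum, one_pow, mul_one]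
  rw [sum_range_sum_range_comm_reflect]
  refine sum_congr rfl fun m hm ↦ ?_
  rw [map_sum, sum_mul]
  refine sum_congr rfl fun k hk ↦ ?_
  simp only [mem_range] at hm hk
  rw [show m + (n - k) = (n - k - m) + 2 * m by omega, pow_add, pow_mul]
  simp only [map_mul, map_pow, map_neg, map_one, map_natCast]
  ring

theorem jacobiP_eq_sum_C_mul_X_pow (a b : ℝ) (n : ℕ) :
    jacobiP a b n = ∑ m ∈ range (n + 1),
      C (∑ k ∈ range (n - m + 1),
        (-1) ^ (n - k - m) * ((ascPochhammer ℝ (n - k)).eval ((n : ℝ) + a + b + 1) *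
          (ascPochhammer ℝ k).eval (a + (n - k : ℕ) + 1)) /
        (2 ^ (n - k) * k.factorial * m.factorial * (n - k - m).factorial)) * X ^ m := by
  simp only [jacobiP, mul_pow, ← C_pow, ← mul_assoc, ← C_mul, sum_C_mul_X_sub_one_pow]
  refine sum_congr rfl fun m hm ↦ ?_
  congr 2
  refine sum_congr rfl fun k hk ↦ ?_
  simp only [mem_range] at hm hk
  rw [Nat.cast_choose ℝ (by omega : m ≤ n - k), show n - (n - k) = k by omega]
  simp only [one_div, inv_pow]
  field_simp

theorem chebV_in_monomials (n : ℕ) :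
    chebV n =
      C ((2 : ℝ) ^ n / ((2 * n).choose n : ℝ)) *
        ∑ m ∈ range (n + 1),
          C ((-1 : ℝ) ^ (n - m) *
             ∑ l ∈ range (n - m + 1),
               2 ^ l * ((ascPochhammer ℝ (n - l)).eval (1 + (n : ℝ)) *
                        (ascPochhammer ℝ l).eval (1 / 2 - (n : ℝ))) /
               ((n - l - m).factorial * m.factorial * l.factorial)) * X ^ m := by
  rw [chebV, jacobiP_eq_sum_C_mul_X_pow, mul_sum, mul_sum]
  refine sum_congr rfl fun m hm ↦ ?_
  simp only [← mul_assoc, ← C_mul, mul_sum]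
  congr 2
  refine sum_congr rfl fun k hk ↦ ?_
  simp only [mem_range] at hm hk
  have hsign : (-1 : ℝ) ^ (n - k - m) = (-1) ^ (n - m) * (-1) ^ k := by
    rw [show n - m = n - k - m + k by omega, pow_add, mul_assoc, ← pow_add, ← two_mul, pow_mul,
      neg_one_sq, one_pow, mul_one]
  have hpoch : (ascPochhammer ℝ k).eval (1 / 2 - (n : ℝ))
      = (-1) ^ k * (ascPochhammer ℝ k).eval (-(1 / 2 : ℝ) + (n - k : ℕ) + 1) := by
    rw [show 1 / 2 - (n : ℝ) = -(n - 1 / 2) by ring, ascPochhammer_eval_neg_eq_ascPochhammer,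
      Nat.cast_sub (by omega : k ≤ n)]
    ring_nf
  rw [hsign, hpoch]
  have hpow : (2 : ℝ) ^ (2 * n) = 2 ^ (n - k) * 2 ^ n * 2 ^ k := by
    rw [← pow_add, ← pow_add]
    congr 1
    omega
  rw [hpow, show (n : ℝ) + -(1 / 2) + 1 / 2 + 1 = 1 + n by ring]
  field_simp
end

section
/- For every natural number $n$, the identity of polynomials $W_n(x) = \frac{2^{n}}{\binom{2n}{n}} \sum_{m=0}^{n} (-1)^{n-m} \Big( \sum_{l=0}^{n-m} 2^{l} \frac{(1+n)_{n-l}\,(-\tfrac{1}{2}-n)_{l}}{(n-l-m)!\, m!\, l!} \Big) x^m$ holds in $\mathbb{R}[x]$. -/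
/-! Expand `((x - 1) / 2)^l` binomially and collect powers of `x`; reindexing the Jacobi sum by
`l ↦ n - l` turns its factor `(3/2 + n - l)_l` into `(-1)^l (-1/2 - n)_l` by the reflection
formula for rising factorials, and `C(n - l, m) / (n - l)! = 1 / (m! (n - l - m)!)`. -/

open Polynomial Finset

theorem ascPochhammer_eval_sub_add_one {R : Type*} [Ring R] (x : R) (l : ℕ) :
    (ascPochhammer R l).eval (x - l + 1) = (-1) ^ l * (ascPochhammer R l).eval (-x) := by
  rw [← descPochhammer_eval_eq_ascPochhammer, ascPochhammer_eval_neg_eq_descPochhammer,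
    ← mul_assoc, ← pow_add, Even.neg_one_pow ⟨l, rfl⟩, one_mul]

theorem Finset.sum_range_succ_eq_sum_reflect_of_eq_zero {M : Type*} [AddCommMonoid M]
    (g : ℕ → M) (n : ℕ) {m : ℕ} (hg : ∀ l < m, g l = 0) :
    ∑ l ∈ range (n + 1), g l = ∑ l ∈ range (n - m + 1), g (n - l) := by
  rw [← sum_range_reflect]
  simp only [Nat.add_sub_cancel]
  refine (sum_subset (range_subset_range.2 (by omega)) fun l hl hl' => hg _ ?_).symm
  simp only [mem_range] at hl hl'
  omega

theorem Polynomial.sum_C_mul_X_sub_one_pow_eq_sum_C_mul_X_pow {R : Type*} [CommRing R]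
    (a : ℕ → R) (n : ℕ) :
    ∑ l ∈ range (n + 1), C (a l) * (X - 1) ^ l =
      ∑ m ∈ range (n + 1),
        C (∑ l ∈ range (n - m + 1), (-1) ^ (n - l - m) * ((n - l).choose m : R) * a (n - l)) *
          X ^ m := by
  ext m
  have hX : (X - 1 : R[X]) = X + C (-1) := by rw [map_neg, C_1, sub_eq_add_neg]
  simp only [finsetSum_coeff, coeff_C_mul, coeff_X_pow, mul_ite, mul_one, mul_zero, hX,
    coeff_X_add_C_pow, sum_ite_eq, mem_range]
  split_ifs with hm
  · rw [sum_range_succ_eq_sum_reflect_of_eq_zero _ n (m := m) fun l hl => by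
      simp [Nat.choose_eq_zero_of_lt hl]]
    exact sum_congr rfl fun l _ => by ring
  · exact sum_eq_zero fun l hl => by
      simp [Nat.choose_eq_zero_of_lt (show l < m by simp at hl; omega)]

theorem chebW_in_monomials (n : ℕ) :
    chebW n =
      C ((2 : ℝ) ^ n / ((2 * n).choose n : ℝ)) *
        ∑ m ∈ range (n + 1),
          C ((-1 : ℝ) ^ (n - m) *
             ∑ l ∈ range (n - m + 1),
               2 ^ l * ((ascPochhammer ℝ (n - l)).eval (1 + (n : ℝ)) *
                        (ascPochhammer ℝ l).eval (-(1 / 2) - (n : ℝ))) /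
               ((n - l - m).factorial * m.factorial * l.factorial)) * X ^ m := by
  rw [chebW, jacobiP]
  simp only [mul_pow, ← C_pow, ← mul_assoc, ← C_mul]
  rw [sum_C_mul_X_sub_one_pow_eq_sum_C_mul_X_pow, mul_sum, mul_sum]
  refine sum_congr rfl fun m hm => ?_
  rw [← mul_assoc, ← mul_assoc, ← C_mul, ← C_mul]
  congr 2
  rw [mul_sum, mul_sum, mul_sum]
  refine sum_congr rfl fun l hl => ?_
  obtain ⟨j, rfl⟩ : ∃ j, n = l + m + j :=
    ⟨n - l - m, by simp only [mem_range] at hl hm; omega⟩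
  have hreflect := ascPochhammer_eval_sub_add_one (((l + m + j : ℕ) : ℝ) + 1 / 2) l
  rw [show ((l + m + j : ℕ) : ℝ) + 1 / 2 - l + 1 = 1 / 2 + ((m + j : ℕ) : ℝ) + 1 by
      push_cast; ring,
    show -(((l + m + j : ℕ) : ℝ) + 1 / 2) = -(1 / 2) - ((l + m + j : ℕ) : ℝ) by ring] at hreflect
  simp only [show l + m + j - l = m + j by omega, show l + m + j - (m + j) = l by omega,
    show l + m + j - m = l + j by omega, Nat.add_sub_cancel_left, hreflect, Nat.cast_add_choose,
    show ((l + m + j : ℕ) : ℝ) + 1 / 2 + -(1 / 2) + 1 = 1 + ((l + m + j : ℕ) : ℝ) by ring]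
  rw [one_div_pow]
  field_simp
  ring
end

section
/- For every natural number $n$, the identity of polynomials $x^n = \sum_{m=0}^{n} \Big( \sum_{l=0}^{n-m} \frac{(-1)^{l}\,(2(n-l)+1)!!\; n!}{(n-l-m)!\,(n-l+m+1)!\, l!} \Big) V_m(x)$ holds in $\mathbb{R}[x]$. -/
/-!
With `z = 2(x - 1)`, the Jacobi sum defining `V_m` becomes `V_m = ∑ₗ C(m+l, 2l) zˡ`, and
Pascal's rule gives the Chebyshev recurrence `V_{m+2} + V_m = (z + 2) V_{m+1}`. Equivalently
`2(1 + x) V_m = (z + 4) V_m = V_{m+1} + 2 V_m + V_{m-1}` with `V_{-1} = V_0`, and an induction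
with the rule `C(n+2, k+2) = C(n, k) + 2 C(n, k+1) + C(n, k+2)` yields
`2ˢ (1 + x)ˢ = ∑ₘ C(2s+1, s+1+m) V_m`. Expanding `x^n = ((1 + x) - 1)^n` binomially and
exchanging the two sums gives the stated coefficients, since `(2s+1)! = (2s+1)!! 2ˢ s!`.
-/

open Polynomial Finset

theorem Nat.choose_add_two_add_two (n k : ℕ) :
    (n + 2).choose (k + 2) = n.choose k + 2 * n.choose (k + 1) + n.choose (k + 2) := by
  rw [Nat.choose_succ_succ', Nat.choose_succ_succ', Nat.choose_succ_succ']
  ring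

theorem Nat.choose_add_two_add_choose (n k : ℕ) :
    (n + 2).choose (k + 2) + n.choose (k + 2) = 2 * (n + 1).choose (k + 2) + n.choose k := by
  rw [Nat.choose_add_two_add_two, Nat.choose_succ_succ' n (k + 1)]
  ring

section ChebVSeries

variable {R : Type*} [CommRing R]

/-- `chebVSeries z m = V_m(1 + z / 2)`. -/
def chebVSeries (z : R) (m : ℕ) : R :=
  ∑ l ∈ range (m + 1), ((m + l).choose (2 * l) : R) * z ^ l

@[simp]
theorem chebVSeries_zero (z : R) : chebVSeries z 0 = 1 := by
  simp [chebVSeries]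

@[simp]
theorem chebVSeries_one (z : R) : chebVSeries z 1 = z + 1 := by
  simp [chebVSeries, sum_range_succ, add_comm]

theorem chebVSeries_eq_sum_range (z : R) {m N : ℕ} (h : m < N) :
    chebVSeries z m = ∑ l ∈ range N, ((m + l).choose (2 * l) : R) * z ^ l := by
  refine sum_subset (range_subset_range.mpr h) fun l _ hl => ?_
  rw [Nat.choose_eq_zero_of_lt (by simp only [mem_range, not_lt] at hl; omega), Nat.cast_zero, zero_mul]

theorem chebVSeries_add_two (z : R) (m : ℕ) :
    chebVSeries z (m + 2) + chebVSeries z m = (z + 2) * chebVSeries z (m + 1) := by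
  have hpascal (l : ℕ) :
      (m + 2 + (l + 1)).choose (2 * (l + 1)) + (m + (l + 1)).choose (2 * (l + 1)) =
        2 * (m + 1 + (l + 1)).choose (2 * (l + 1)) + (m + 1 + l).choose (2 * l) := by
    rw [show m + 2 + (l + 1) = m + 1 + l + 2 by omega, show 2 * (l + 1) = 2 * l + 2 by omega,
      show m + (l + 1) = m + 1 + l by omega, show m + 1 + (l + 1) = m + 1 + l + 1 by omega]
    exact Nat.choose_add_two_add_choose _ _
  have hz : z * chebVSeries z (m + 1) =
      ∑ l ∈ range (m + 2), ((m + 1 + l).choose (2 * l) : R) * z ^ (l + 1) := by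
    simp only [chebVSeries, mul_sum, pow_succ]
    exact sum_congr rfl fun _ _ => by ring
  have hpad := chebVSeries_eq_sum_range z (show m + 1 < m + 3 by omega)
  rw [sum_range_succ'] at hpad
  rw [add_mul, hz, hpad, chebVSeries_eq_sum_range z (show m < m + 3 by omega), chebVSeries,
    ← sum_add_distrib, sum_range_succ']
  simp only [← add_mul, ← Nat.cast_add, hpascal]
  simp only [Nat.cast_add, Nat.cast_mul, Nat.cast_ofNat, Nat.cast_one, add_mul, mul_assoc,
    sum_add_distrib, ← mul_sum, mul_zero, Nat.choose_zero_right, pow_zero]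
  ring

/-- For `m = 0` the truncated `m - 1 = 0` plays the role of `V_{-1} = V_0`. -/
theorem add_four_mul_chebVSeries (z : R) (m : ℕ) :
    (z + 4) * chebVSeries z m =
      chebVSeries z (m + 1) + 2 * chebVSeries z m + chebVSeries z (m - 1) := by
  cases m with
  | zero => simp only [zero_add, Nat.zero_sub, chebVSeries_zero, chebVSeries_one]; ring
  | succ k => rw [Nat.add_sub_cancel]; linear_combination -chebVSeries_add_two z k

theorem add_four_pow_eq_sum_chebVSeries (z : R) (s : ℕ) :
    (z + 4) ^ s =
      ∑ m ∈ range (s + 1), ((2 * s + 1).choose (s + 1 + m) : R) * chebVSeries z m := by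
  induction s with
  | zero => simp
  | succ s ih =>
    set B : ℕ → R := fun k => ((2 * s + 1).choose (s + k) : R) with hB
    have hB0 : B 0 = B 1 := by
      simp only [hB, add_zero, Nat.choose_symm_half]
    have hB_eq_zero : ∀ k, s + 1 < k → B k = 0 := fun k hk => by
      simp only [hB, Nat.choose_eq_zero_of_lt (show 2 * s + 1 < s + k by omega), Nat.cast_zero]
    have hpascal (m : ℕ) :
        ((2 * (s + 1) + 1).choose (s + 1 + 1 + m) : R) = B m + 2 * B (m + 1) + B (m + 2) := by
      rw [show 2 * (s + 1) + 1 = 2 * s + 1 + 2 by ring, show s + 1 + 1 + m = s + m + 2 by ring,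
        Nat.choose_add_two_add_two]
      simp [hB, add_assoc]
    have hshift : ∑ m ∈ range (s + 1), B (m + 1) * chebVSeries z (m - 1) =
        ∑ m ∈ range s, B (m + 2) * chebVSeries z m + B 1 * chebVSeries z 0 := by
      rw [sum_range_succ']; rfl
    have hexpand : ∑ m ∈ range (s + 1), ((2 * s + 1).choose (s + 1 + m) : R) * chebVSeries z m *
        (z + 4) = ∑ m ∈ range (s + 1), B (m + 1) * chebVSeries z (m + 1) +
          2 * ∑ m ∈ range (s + 1), B (m + 1) * chebVSeries z m +
          ∑ m ∈ range (s + 1), B (m + 1) * chebVSeries z (m - 1) := by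
      rw [mul_sum, ← sum_add_distrib, ← sum_add_distrib]
      refine sum_congr rfl fun m _ => ?_
      rw [mul_assoc, mul_comm (chebVSeries z m), add_four_mul_chebVSeries, hB,
        show s + 1 + m = s + (m + 1) by ring]
      ring
    rw [pow_succ, ih, sum_mul, hexpand, hshift]
    simp only [hpascal, add_mul, mul_assoc, sum_add_distrib, ← mul_sum]
    rw [sum_range_succ' (fun m => B m * _), sum_range_succ (fun m => B (m + 1) * _) (s + 1),
      sum_range_succ (fun m => B (m + 2) * _), sum_range_succ (fun m => B (m + 2) * _),
      hB_eq_zero (s + 2) (by omega), hB_eq_zero (s + 3) (by omega), hB0]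
    ring

end ChebVSeries

section ChebV

open Nat

theorem ascPochhammer_eval_natCast_add_half (l k : ℕ) :
    4 ^ k * (2 * l)! * (l + k)! * (ascPochhammer ℝ k).eval ((l : ℝ) + 1 / 2) =
      (2 * (l + k))! * l ! := by
  induction k with
  | zero => simp [mul_comm]
  | succ k ih =>
    rw [ascPochhammer_succ_eval, show 2 * (l + (k + 1)) = 2 * (l + k) + 1 + 1 by ring,
      ← add_assoc, factorial_succ, factorial_succ, factorial_succ]
    push_cast
    linear_combination (2 * ((l : ℝ) + k) + 2) * (2 * (l + k) + 1) * ih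

theorem ascPochhammer_eval_natCast_add_one (m k : ℕ) :
    m ! * (ascPochhammer ℝ k).eval ((m : ℝ) + 1) = (m + k)! := by
  rw [← Nat.cast_add_one, ascPochhammer_nat_eq_natCast_ascFactorial,
    ← factorial_mul_ascFactorial]
  push_cast; rfl

theorem chebV_coeff_eq {l m : ℕ} (h : l ≤ m) :
    (2 : ℝ) ^ (2 * m) / (2 * m).choose m *
        ((ascPochhammer ℝ l).eval ((m : ℝ) + -(1 / 2) + 1 / 2 + 1) *
          (ascPochhammer ℝ (m - l)).eval (-(1 / 2) + (l : ℝ) + 1) / (l ! * (m - l)!)) *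
        (1 / 2) ^ l =
      (m + l).choose (2 * l) * 2 ^ l := by
  obtain ⟨d, rfl⟩ := Nat.exists_eq_add_of_le h
  have h₁ := ascPochhammer_eval_natCast_add_one (l + d) l
  have h₂ := ascPochhammer_eval_natCast_add_half l d
  rw [show ((l + d : ℕ) : ℝ) + -(1 / 2) + 1 / 2 + 1 = ((l + d : ℕ) : ℝ) + 1 by ring,
    show -(1 / 2) + (l : ℝ) + 1 = l + 1 / 2 by ring, Nat.add_sub_cancel_left,
    Nat.cast_choose ℝ (show l + d ≤ 2 * (l + d) by omega),
    Nat.cast_choose ℝ (show 2 * l ≤ l + d + l by omega),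
    show 2 * (l + d) - (l + d) = l + d by omega, show l + d + l - 2 * l = d by omega]
  rw [mul_comm] at h₁ h₂
  rw [eq_div_of_mul_eq (by positivity) h₁, eq_div_of_mul_eq (by positivity) h₂, pow_mul,
    pow_add, show (2 : ℝ) ^ 2 = 2 * 2 by norm_num, mul_pow, div_pow, one_pow]
  field_simp
  ring

theorem chebV_eq_chebVSeries (m : ℕ) : chebV m = chebVSeries (2 * (X - 1)) m := by
  rw [chebV, jacobiP, chebVSeries, mul_sum]
  refine sum_congr rfl fun l hl => ?_
  rw [← mul_assoc, ← C_mul, mul_pow, mul_pow, ← C_pow, ← mul_assoc, ← C_mul,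
    chebV_coeff_eq (by simpa [Nat.lt_succ_iff] using hl), C_mul, C_pow]
  simp only [map_natCast, map_ofNat, mul_assoc]

theorem X_add_one_pow_eq_sum_chebV (s : ℕ) :
    (X + 1 : ℝ[X]) ^ s =
      ∑ m ∈ range (s + 1), C (((2 * s + 1).choose (s + 1 + m) : ℝ) / 2 ^ s) * chebV m := by
  have h := add_four_pow_eq_sum_chebVSeries (2 * (X - 1) : ℝ[X]) s
  rw [show 2 * (X - 1) + 4 = C 2 * (X + 1 : ℝ[X]) by simp only [map_ofNat]; ring, mul_pow,
    ← C_pow] at h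
  calc (X + 1 : ℝ[X]) ^ s = C (2 ^ s)⁻¹ * (C (2 ^ s) * (X + 1) ^ s) := by
        rw [← mul_assoc, ← C_mul, inv_mul_cancel₀ (by positivity), C_1, one_mul]
    _ = _ := by
        rw [h, mul_sum]
        refine sum_congr rfl fun m _ => ?_
        rw [chebV_eq_chebVSeries, ← map_natCast C, ← mul_assoc, ← C_mul, inv_mul_eq_div]

theorem choose_mul_choose_div_two_pow {m s n : ℕ} (hms : m ≤ s) (hsn : s ≤ n) :
    (n.choose s : ℝ) * (2 * s + 1).choose (s + 1 + m) / 2 ^ s =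
      (2 * s + 1)‼ * n ! / ((s - m)! * (s + m + 1)! * (n - s)!) := by
  rw [Nat.cast_choose ℝ hsn, Nat.cast_choose ℝ (show s + 1 + m ≤ 2 * s + 1 by omega),
    show 2 * s + 1 - (s + 1 + m) = s - m by omega, show s + 1 + m = s + m + 1 by omega,
    factorial_eq_mul_doubleFactorial, doubleFactorial_two_mul]
  push_cast
  field_simp

theorem sum_chebV_coeff_eq_sum_Ico {m n : ℕ} (h : m ≤ n) :
    ∑ l ∈ range (n - m + 1),
        (-1 : ℝ) ^ l * ((2 * (n - l) + 1)‼ : ℝ) * n ! /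
          ((n - l - m)! * (n - l + m + 1)! * l !) =
      ∑ s ∈ Ico m (n + 1),
        (-1 : ℝ) ^ (n - s) * n.choose s * ((2 * s + 1).choose (s + 1 + m) / 2 ^ s) := by
  rw [sum_Ico_eq_sum_range, show n + 1 - m = n - m + 1 by omega, ← sum_range_reflect]
  refine sum_congr rfl fun l hl => ?_
  have hl : l ≤ n - m := Nat.lt_succ_iff.mp (mem_range.mp hl)
  rw [show n - m + 1 - 1 - l = n - (m + l) by omega, show n - (n - (m + l)) = m + l by omega,
    mul_assoc _ (n.choose _ : ℝ), ← mul_div_assoc,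
    choose_mul_choose_div_two_pow (s := m + l) (by omega) (by omega)]
  ring

end ChebV

theorem monomial_in_chebV (n : ℕ) :
    (X : ℝ[X]) ^ n =
      ∑ m ∈ range (n + 1),
        C (∑ l ∈ range (n - m + 1),
            (-1 : ℝ) ^ l * (Nat.doubleFactorial (2 * (n - l) + 1) : ℝ) * n.factorial /
            ((n - l - m).factorial * (n - l + m + 1).factorial * l.factorial)) * chebV m := by
  calc (X : ℝ[X]) ^ n
        = ∑ s ∈ range (n + 1), C ((-1 : ℝ) ^ (n - s) * n.choose s) * (X + 1) ^ s := by
        rw [show (X : ℝ[X]) = X + 1 + (-1) by ring, add_pow]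
        refine sum_congr rfl fun s _ => ?_
        simp only [C_mul, C_pow, map_neg, map_one, map_natCast]
        ring
    _ = ∑ s ∈ Ico 0 (n + 1), ∑ m ∈ Ico 0 (s + 1),
          C ((-1 : ℝ) ^ (n - s) * n.choose s * ((2 * s + 1).choose (s + 1 + m) / 2 ^ s)) *
            chebV m := by
        simp only [← range_eq_Ico, X_add_one_pow_eq_sum_chebV, mul_sum, ← mul_assoc, ← C_mul]
    _ = _ := by
        rw [← sum_Ico_Ico_comm, ← range_eq_Ico]
        refine sum_congr rfl fun m hm => ?_
        rw [sum_chebV_coeff_eq_sum_Ico (Nat.lt_succ_iff.mp (mem_range.mp hm)), map_sum, sum_mul]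
end

section
/- For every natural number $n \geq 1$, the identity of polynomials $T_n(2x-1) = \sum_{k=0}^{n} \Big( \frac{n}{2} \sum_{v=0}^{\lfloor k/2 \rfloor} \binom{n-2v}{k-2v} (-1)^{k-v}\, 2^{2(n-v)-k}\, \frac{(n-v-1)!}{v!\,(n-2v)!} \Big) x^{n-k}$ holds in $\mathbb{R}[x]$. -/
/-!
For `n ≥ 1` the classical explicit formula
`T_n(x) = (n/2) ∑_v (-1)^v (n-v-1)! / (v! (n-2v)!) (2x)^(n-2v)`
follows from the recurrence `T_(n+2) = 2x T_(n+1) - T_n`, because its coefficients satisfy the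
same Pascal-type rule. Substituting `2x - 1` and expanding each `(2x - 1)^(n-2v)` binomially gives a
double sum over pairs `(v, j)`; the coefficient of `x^(n-k)` collects the pairs with `2v + j = k`.
-/

open Polynomial Finset

open scoped Nat

section ChebyshevExplicit

variable (K : Type*) [Field K] [CharZero K]

noncomputable def chebTCoeff (n v : ℕ) : K :=
  (n : K) / 2 * (-1) ^ v * 2 ^ (n - 2 * v) * ((n - v - 1)! : K) / (v ! * (n - 2 * v)!)

noncomputable def chebTSum (n : ℕ) : K[X] :=
  ∑ v ∈ range (n / 2 + 1), C (chebTCoeff K n v) * X ^ (n - 2 * v)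

variable {K}

lemma chebTCoeff_succ_zero (n : ℕ) : chebTCoeff K (n + 1) 0 = 2 ^ n := by
  have := (Nat.cast_ne_zero (R := K)).2 n.factorial_ne_zero
  simp only [chebTCoeff, Nat.sub_zero, mul_zero, Nat.add_sub_cancel, Nat.factorial_succ]
  push_cast
  field_simp
  ring

lemma chebTCoeff_two_mul_self {v : ℕ} (hv : v ≠ 0) : chebTCoeff K (2 * v) v = (-1) ^ v := by
  obtain ⟨w, rfl⟩ := Nat.exists_eq_succ_of_ne_zero hv
  rw [chebTCoeff, Nat.sub_self, show 2 * (w + 1) - (w + 1) - 1 = w by omega, Nat.factorial_succ]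
  have := (Nat.cast_ne_zero (R := K)).2 w.factorial_ne_zero
  push_cast
  field_simp
  ring

lemma chebTCoeff_add_two_succ {n v : ℕ} (h : 2 * v < n) :
    chebTCoeff K (n + 2) (v + 1) = 2 * chebTCoeff K (n + 1) (v + 1) - chebTCoeff K n v := by
  obtain ⟨d, rfl⟩ : ∃ d, n = 2 * v + 1 + d := ⟨n - (2 * v + 1), by omega⟩
  simp only [chebTCoeff]
  rw [show 2 * v + 1 + d + 2 - 2 * (v + 1) = d + 1 by omega,
    show 2 * v + 1 + d + 2 - (v + 1) - 1 = v + d + 1 by omega,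
    show 2 * v + 1 + d + 1 - 2 * (v + 1) = d by omega,
    show 2 * v + 1 + d + 1 - (v + 1) - 1 = v + d by omega,
    show 2 * v + 1 + d - 2 * v = d + 1 by omega,
    show 2 * v + 1 + d - v - 1 = v + d by omega,
    Nat.factorial_succ (v + d), Nat.factorial_succ v, Nat.factorial_succ d]
  push_cast
  field_simp
  ring

lemma sum_range_div_two_succ_eq_sum_ite {M : Type*} [AddCommMonoid M] (g : ℕ → M) {n N : ℕ}
    (hN : n / 2 < N) :
    ∑ v ∈ range (n / 2 + 1), g v = ∑ v ∈ range N, if 2 * v ≤ n then g v else 0 := by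
  rw [← sum_filter]
  congr 1
  ext v
  simp only [mem_range, mem_filter]
  omega

lemma chebTSum_add_two {n : ℕ} (hn : n ≠ 0) :
    chebTSum K (n + 2) = 2 * X * chebTSum K (n + 1) - chebTSum K n := by
  -- Padding by `if 2 * v ≤ _` puts the three sums on one range, so that `n` even and `n` odd need
  -- no separate treatment; for `2 * v = n` the middle sum has no term.
  simp only [chebTSum]
  rw [sum_range_div_two_succ_eq_sum_ite _ (show (n + 2) / 2 < n / 2 + 2 by omega),
    sum_range_div_two_succ_eq_sum_ite _ (show (n + 1) / 2 < n / 2 + 2 by omega),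
    sum_range_div_two_succ_eq_sum_ite _ (show n / 2 < n / 2 + 1 by omega),
    sum_range_succ' _ (n / 2 + 1), sum_range_succ' _ (n / 2 + 1), mul_add, mul_sum,
    add_sub_right_comm, ← sum_sub_distrib]
  congr 1
  · refine sum_congr rfl fun v _ => ?_
    split_ifs <;> try omega
    · rw [show n + 2 - 2 * (v + 1) = n - 2 * v by omega,
        show n - 2 * v = n + 1 - 2 * (v + 1) + 1 by omega, chebTCoeff_add_two_succ (by omega)]
      simp only [map_sub, map_mul, map_ofNat, pow_succ]
      ring
    · obtain rfl : n = 2 * v := by omega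
      rw [show 2 * v + 2 = 2 * (v + 1) by ring, chebTCoeff_two_mul_self (by omega),
        chebTCoeff_two_mul_self (by omega)]
      simp [pow_succ]
    · simp
  · simp only [mul_zero, zero_le, if_true, Nat.sub_zero, chebTCoeff_succ_zero, map_pow, map_ofNat]
    ring

lemma chebT_eq_chebTSum {n : ℕ} (hn : n ≠ 0) : Chebyshev.T K n = chebTSum K n := by
  induction n using Nat.twoStepInduction with
  | zero => exact absurd rfl hn
  | one => simp [chebTSum, chebTCoeff_succ_zero 0]
  | more n ih₀ ih₁ =>
    rcases eq_or_ne n 0 with rfl | hn₀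
    · have h₂₁ : chebTCoeff K 2 1 = -1 := by
        simpa using chebTCoeff_two_mul_self (K := K) one_ne_zero
      simp [chebTSum, sum_range_succ, chebTCoeff_succ_zero 1, h₂₁, Chebyshev.T_two,
        sub_eq_add_neg, ← C_ofNat]
    · rw [chebTSum_add_two hn₀, ← ih₀ hn₀, ← ih₁ n.succ_ne_zero]
      exact_mod_cast Chebyshev.T_add_two K n

end ChebyshevExplicit

lemma two_mul_X_sub_one_pow {R : Type*} [CommRing R] (m : ℕ) :
    (2 * X - 1 : R[X]) ^ m =
      ∑ j ∈ range (m + 1), C ((-1) ^ j * 2 ^ (m - j) * (m.choose j : R)) * X ^ (m - j) := by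
  rw [sub_eq_neg_add, add_pow]
  refine sum_congr rfl fun j _ => ?_
  simp only [map_mul, map_pow, map_neg, map_one, map_ofNat, map_natCast, mul_pow]
  ring

lemma sum_range_sum_range_div_two_succ {M : Type*} [AddCommMonoid M] (f : ℕ → ℕ → M)
    (n : ℕ) :
    ∑ k ∈ range (n + 1), ∑ v ∈ range (k / 2 + 1), f k v =
      ∑ v ∈ range (n / 2 + 1), ∑ j ∈ range (n - 2 * v + 1), f (2 * v + j) v := by
  rw [sum_comm' (t' := range (n / 2 + 1)) (s' := fun v => Ico (2 * v) (n + 1))]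
  · refine sum_congr rfl fun v hv => ?_
    rw [sum_Ico_eq_sum_range, show n + 1 - 2 * v = n - 2 * v + 1 by grind]
  · intro k v
    simp only [mem_range, mem_Ico]
    omega

theorem shifted_chebT_in_monomials (n : ℕ) (hn : 1 ≤ n) :
    (Polynomial.Chebyshev.T ℝ (n : ℤ)).comp (2 * X - 1) =
      ∑ k ∈ range (n + 1),
        C ((n : ℝ) / 2 *
           ∑ v ∈ range (k / 2 + 1),
             ((n - 2 * v).choose (k - 2 * v) : ℝ) * (-1 : ℝ) ^ (k - v) *
             2 ^ (2 * (n - v) - k) * (n - v - 1).factorial /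
             (v.factorial * (n - 2 * v).factorial)) * X ^ (n - k) := by
  simp only [mul_sum, map_sum, sum_mul]
  rw [chebT_eq_chebTSum (by omega), chebTSum, Polynomial.sum_comp,
    sum_range_sum_range_div_two_succ]
  refine sum_congr rfl fun v hv => ?_
  rw [mul_comp, C_comp, pow_comp, X_comp, two_mul_X_sub_one_pow, mul_sum]
  refine sum_congr rfl fun j hj => ?_
  have hjv : 2 * v + j ≤ n := by grind
  rw [← mul_assoc, ← map_mul, Nat.add_sub_cancel_left, Nat.sub_sub]
  congr 2
  rw [chebTCoeff, show 2 * v + j - v = v + j by omega,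
    show 2 * (n - v) - (2 * v + j) = (n - 2 * v) + (n - (2 * v + j)) by omega]
  ring
end

section
/- For every natural number $n$, the identity of polynomials $U_n(2x-1) = \sum_{k=0}^{n} \Big( \sum_{v=0}^{\lfloor k/2 \rfloor} \binom{n-2v}{k-2v} \binom{n-v}{v} (-1)^{k-v}\, 2^{2(n-v)-k} \Big) x^{n-k}$ holds in $\mathbb{R}[x]$. -/
/-!
With `S_n(y) = U_n(y / 2)` the rescaled polynomials, `U_n(2x - 1) = S_n(4x - 2)`. The recurrence
`S_{n+2} = y S_{n+1} - S_n` together with Pascal's rule gives the classical expansion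
`S_n(y) = ∑_v (-1)^v C(n-v, v) y^(n-2v)`. Expanding each `(4x - 2)^(n-2v)` binomially and
collecting the monomial `x^(n-k)`, which comes from the pairs `(v, j)` with `k = 2v + j`, yields
the stated coefficients.
-/

open Polynomial Finset

theorem Nat.succ_sub_choose_succ (n v : ℕ) :
    (n + 1 - v).choose (v + 1) = (n - v).choose v + (n - v).choose (v + 1) := by
  rcases le_or_gt v n with h | h
  · rw [Nat.sub_add_comm h, Nat.choose_succ_succ]
  · obtain ⟨w, rfl⟩ : ∃ w, v = w + 1 := ⟨v - 1, by omega⟩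
    simp [Nat.sub_eq_zero_of_le h.le, Nat.sub_eq_zero_of_le h]

namespace Polynomial.Chebyshev

variable (R : Type*) [CommRing R]

noncomputable def sTerm (n v : ℕ) : R[X] :=
  Polynomial.C ((-1) ^ v * ((n - v).choose v : R)) * X ^ (n - 2 * v)

variable {R}

theorem sTerm_eq_zero {n v : ℕ} (h : n < 2 * v) : sTerm R n v = 0 := by
  simp [sTerm, Nat.choose_eq_zero_of_lt (show n - v < v by omega)]

theorem sTerm_succ_succ (n v : ℕ) :
    sTerm R (n + 2) (v + 1) = X * sTerm R (n + 1) (v + 1) - sTerm R n v := by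
  have hX : ((n - v).choose (v + 1) : R[X]) * X ^ (n - 2 * v) =
      ((n - v).choose (v + 1) : R[X]) * (X * X ^ (n + 1 - 2 * (v + 1))) := by
    rcases le_or_gt (2 * v + 1) n with h | h
    · rw [← pow_succ']; congr 2; omega
    · simp [Nat.choose_eq_zero_of_lt (show n - v < v + 1 by omega)]
  simp only [sTerm, show n + 2 - (v + 1) = n + 1 - v by omega,
    show n + 1 - (v + 1) = n - v by omega, show n + 2 - 2 * (v + 1) = n - 2 * v by omega,
    Nat.succ_sub_choose_succ, Nat.cast_add, map_add, map_mul, map_pow, map_neg, map_one,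
    map_natCast]
  linear_combination (-1) ^ (v + 1) * hX

theorem sTerm_zero_succ (n : ℕ) : sTerm R (n + 1) 0 = X * sTerm R n 0 := by
  simp [sTerm, pow_succ']

theorem S_eq_sum_sTerm (n : ℕ) : S R n = ∑ v ∈ range (n + 1), sTerm R n v := by
  induction n using Nat.twoStepInduction with
  | zero => simp [sTerm]
  | one => simp [sTerm, sum_range_succ]
  | more n ih0 ih1 =>
    have hS : S R ((n + 2 : ℕ) : ℤ) = X * S R ((n + 1 : ℕ) : ℤ) - S R (n : ℤ) := by
      exact_mod_cast S_add_two R n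
    rw [hS, ih0, ih1, sum_range_succ' (sTerm R (n + 2)), sum_range_succ' (sTerm R (n + 1))]
    simp only [sTerm_succ_succ, sum_sub_distrib, ← mul_sum, sTerm_zero_succ]
    rw [sum_range_succ (fun v ↦ sTerm R (n + 1) (v + 1)) (n + 1),
      sum_range_succ (sTerm R n) (n + 1), sTerm_eq_zero (v := n + 1 + 1) (by omega),
      sTerm_eq_zero (v := n + 1) (by omega)]
    ring

theorem S_eq_sum_choose (n : ℕ) :
    S R n = ∑ v ∈ range (n / 2 + 1),
      Polynomial.C ((-1) ^ v * ((n - v).choose v : R)) * X ^ (n - 2 * v) := by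
  rw [S_eq_sum_sTerm]
  refine (sum_subset (fun v hv ↦ ?_) fun v hv hv' ↦ sTerm_eq_zero ?_).symm
  · simp only [mem_range] at hv ⊢; omega
  · simp only [mem_range] at hv hv'; omega

end Polynomial.Chebyshev

theorem Polynomial.C_add_C_mul_X_pow {R : Type*} [CommSemiring R] (a b : R) (m : ℕ) :
    (C b + C a * X) ^ m =
      ∑ j ∈ range (m + 1), C (b ^ j * a ^ (m - j) * m.choose j) * X ^ (m - j) := by
  rw [add_pow]
  refine sum_congr rfl fun j _ ↦ ?_
  simp only [mul_pow, map_mul, map_pow, map_natCast]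
  ring

theorem Finset.sum_range_sum_range_two_mul_add {M : Type*} [AddCommMonoid M]
    (f : ℕ → ℕ → M) (n : ℕ) :
    ∑ v ∈ range (n / 2 + 1), ∑ j ∈ range (n - 2 * v + 1), f v (2 * v + j) =
      ∑ k ∈ range (n + 1), ∑ v ∈ range (k / 2 + 1), f v k := by
  have hIco : ∀ v ∈ range (n / 2 + 1),
      ∑ j ∈ range (n - 2 * v + 1), f v (2 * v + j) = ∑ k ∈ Ico (2 * v) (n + 1), f v k := by
    intro v hv
    simp only [mem_range] at hv
    rw [sum_Ico_eq_sum_range, show n + 1 - 2 * v = n - 2 * v + 1 by omega]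
  rw [sum_congr rfl hIco]
  refine sum_comm' fun v k ↦ ?_
  simp only [mem_range, mem_Ico]
  omega

theorem neg_one_pow_mul_neg_two_pow_mul_four_pow {R : Type*} [CommRing R] {n v j : ℕ}
    (h : 2 * v + j ≤ n) :
    (-1 : R) ^ v * (-2) ^ j * 4 ^ (n - (2 * v + j)) =
      (-1) ^ (2 * v + j - v) * 2 ^ (2 * (n - v) - (2 * v + j)) := by
  obtain ⟨m, rfl⟩ : ∃ m, n = 2 * v + j + m := ⟨n - (2 * v + j), by omega⟩
  rw [show 2 * v + j + m - (2 * v + j) = m by omega, show 2 * v + j - v = v + j by omega,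
    show 2 * (2 * v + j + m - v) - (2 * v + j) = j + 2 * m by omega, neg_pow (2 : R), pow_add,
    pow_add, pow_mul]
  ring

theorem shifted_chebU_in_monomials (n : ℕ) :
    (Polynomial.Chebyshev.U ℝ (n : ℤ)).comp (2 * X - 1) =
      ∑ k ∈ range (n + 1),
        C (∑ v ∈ range (k / 2 + 1),
            ((n - 2 * v).choose (k - 2 * v) : ℝ) * ((n - v).choose v : ℝ) *
            (-1 : ℝ) ^ (k - v) * 2 ^ (2 * (n - v) - k)) * X ^ (n - k) := by
  have hshift : (2 * X : ℝ[X]).comp (2 * X - 1) = C (-2) + C 4 * X := by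
    simp only [mul_comp, ofNat_comp, X_comp, map_neg, map_ofNat]; ring
  rw [← Chebyshev.S_comp_two_mul_X, comp_assoc, hshift, Chebyshev.S_eq_sum_choose,
    Polynomial.sum_comp]
  simp_rw [map_sum, sum_mul]
  rw [← sum_range_sum_range_two_mul_add]
  refine sum_congr rfl fun v hv ↦ ?_
  rw [mul_comp, C_comp, pow_comp, X_comp, C_add_C_mul_X_pow, mul_sum]
  refine sum_congr rfl fun j hj ↦ ?_
  have hk : 2 * v + j ≤ n := by simp only [mem_range] at hv hj; omega
  rw [← mul_assoc, ← C_mul, Nat.add_sub_cancel_left, Nat.sub_sub]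
  congr 2
  linear_combination ((n - 2 * v).choose j * (n - v).choose v : ℝ) *
    neg_one_pow_mul_neg_two_pow_mul_four_pow (R := ℝ) hk
end

section
/- For every natural number $n$, the identity of polynomials $V_n(2x-1) = \sum_{k=0}^{n} \Big( (-1)^{k}\, \frac{2^{2n-k}}{\binom{2n}{n}\,(n-k)!} \sum_{v=0}^{k} \sum_{l=0}^{v} 2^{l}\, \frac{(1+n)_{n-l}\,(\tfrac{1}{2}-n)_{l}}{(k-v)!\,(v-l)!\, l!} \Big) x^{n-k}$ holds in $\mathbb{R}[x]$. -/
open Polynomial Finset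

/-!
Substituting `z = 2x - 1` turns `(z - 1)/2` into `x - 1`, so `V_n(2x - 1)` is a combination of the
powers `(x - 1)^l`; expanding these binomially, the coefficient of `x^(n-k)` is a sum over
`l = n - i` with `i ≤ k`. On the other side, the inner sum over `v` collapses by
`∑_v 1/((k-v)! (v-l)!) = 2^(k-l)/(k-l)!`, and the two sums then agree termwise by the reflection
`(1/2 - n)_i = (-1)^i (n - i + 1/2)_i`.
-/

section FactorialSums

variable {K : Type*} [Field K] [CharZero K]

lemma sum_range_inv_factorial_mul_factorial (m : ℕ) :
    ∑ w ∈ range (m + 1), ((m - w).factorial * w.factorial : K)⁻¹ = 2 ^ m / m.factorial := by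
  have hchoose : ∀ w ∈ range (m + 1),
      ((m - w).factorial * w.factorial : K)⁻¹ = m.choose w / m.factorial := by
    intro w hw
    have : (m.factorial : K) ≠ 0 := Nat.cast_ne_zero.2 m.factorial_ne_zero
    rw [Nat.cast_choose K (mem_range_succ_iff.mp hw)]
    field_simp
  rw [sum_congr rfl hchoose, ← sum_div]
  exact_mod_cast congrArg (fun s : ℕ => (s : K) / m.factorial) (Nat.sum_range_choose m)

lemma sum_range_sum_range_div_factorial_mul_factorial_mul_factorial (g : ℕ → K) (k : ℕ) :
    ∑ v ∈ range (k + 1), ∑ l ∈ range (v + 1),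
        g l / ((k - v).factorial * (v - l).factorial * l.factorial) =
      ∑ l ∈ range (k + 1), g l * 2 ^ (k - l) / ((k - l).factorial * l.factorial) := by
  have hswap := sum_Ico_Ico_comm 0 (k + 1)
    fun l v => g l / ((k - v).factorial * (v - l).factorial * l.factorial : K)
  simp only [Nat.Ico_zero_eq_range] at hswap
  rw [← hswap]
  refine sum_congr rfl fun l hl => ?_
  obtain ⟨m, rfl⟩ : ∃ m, k = l + m := ⟨k - l, by have := mem_range.mp hl; omega⟩
  have hterm : ∀ w ∈ range (m + 1),
      g l / ((l + m - (l + w)).factorial * (l + w - l).factorial * l.factorial : K) =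
        g l / l.factorial * ((m - w).factorial * w.factorial : K)⁻¹ := by
    intro w _
    rw [show l + m - (l + w) = m - w by omega, Nat.add_sub_cancel_left]
    field_simp
  rw [sum_Ico_eq_sum_range, show l + m + 1 - l = m + 1 by omega, sum_congr rfl hterm, ← mul_sum,
    sum_range_inv_factorial_mul_factorial, Nat.add_sub_cancel_left]
  field_simp

end FactorialSums

namespace Polynomial

variable {R : Type*} [CommRing R]

lemma natDegree_sum_range_C_mul_X_sub_one_pow_le (c : ℕ → R) (n : ℕ) :
    (∑ l ∈ range (n + 1), C (c l) * (X - 1) ^ l).natDegree ≤ n := by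
  refine natDegree_sum_le_of_forall_le _ _ fun l hl => ?_
  have hlin : (X - 1 : R[X]).natDegree ≤ 1 := by simpa using natDegree_X_sub_C_le (1 : R)
  refine (natDegree_C_mul_le _ _).trans ((natDegree_pow_le_of_le l hlin).trans ?_)
  simpa [Nat.lt_succ_iff] using hl

lemma coeff_sum_range_C_mul_X_sub_one_pow (c : ℕ → R) {n k : ℕ} (hk : k ≤ n) :
    (∑ l ∈ range (n + 1), C (c l) * (X - 1) ^ l).coeff (n - k) =
      ∑ i ∈ range (k + 1), (-1) ^ (k - i) * (n - i).choose (n - k) * c (n - i) := by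
  have hpow : ∀ l,
      ((X - 1 : R[X]) ^ l).coeff (n - k) = (-1) ^ (l - (n - k)) * l.choose (n - k) := by
    intro l
    rw [sub_eq_add_neg, ← C_1, ← C_neg, coeff_X_add_C_pow]
  simp only [finsetSum_coeff, coeff_C_mul, hpow]
  rw [← sum_range_reflect, ← sum_subset (range_subset_range.mpr (Nat.succ_le_succ hk))]
  · refine sum_congr rfl fun i hi => ?_
    rw [show n + 1 - 1 - i = n - i by omega,
      show n - i - (n - k) = k - i by have := mem_range_succ_iff.mp hi; omega]
    ring
  · intro i hi hik
    rw [Nat.choose_eq_zero_of_lt (by rw [mem_range] at hi hik; omega), Nat.cast_zero, mul_zero, mul_zero]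

lemma as_sum_range_C_coeff_sub_mul_X_pow_sub (p : R[X]) {n : ℕ} (hp : p.natDegree ≤ n) :
    p = ∑ k ∈ range (n + 1), C (p.coeff (n - k)) * X ^ (n - k) := by
  have hreflect := sum_range_reflect (fun k => C (p.coeff k) * X ^ k) (n + 1)
  simp only [Nat.add_sub_cancel] at hreflect
  rw [hreflect]
  exact as_sum_range_C_mul_X_pow' p (Nat.lt_succ_of_le hp)

end Polynomial

/-- The coefficient of `((z - 1) / 2) ^ l` in `jacobiP a b n`. -/
noncomputable def jacobiCoeff (a b : ℝ) (n l : ℕ) : ℝ :=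
  (ascPochhammer ℝ l).eval ((n : ℝ) + a + b + 1) * (ascPochhammer ℝ (n - l)).eval (a + l + 1) /
    (l.factorial * (n - l).factorial)

lemma jacobiP_comp_two_mul_X_sub_one (a b : ℝ) (n : ℕ) :
    (jacobiP a b n).comp (2 * X - 1) =
      ∑ l ∈ range (n + 1), C (jacobiCoeff a b n l) * (X - 1) ^ l := by
  have hhalf : C (1 / 2 : ℝ) * (2 * X - 1 - 1) = X - 1 := by
    rw [show (2 * X - 1 - 1 : ℝ[X]) = C 2 * (X - 1) by rw [map_ofNat]; ring, ← mul_assoc, ← C_mul]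
    norm_num
  simp only [jacobiP, Polynomial.sum_comp, mul_comp, C_comp, pow_comp, sub_comp, X_comp, one_comp,
    hhalf]
  rfl

lemma choose_mul_jacobiCoeff_neg_half_half {i k n : ℕ} (hik : i ≤ k) (hkn : k ≤ n) :
    ((n - i).choose (n - k) : ℝ) * jacobiCoeff (-(1 / 2)) (1 / 2) n (n - i) =
      (-1) ^ i * ((ascPochhammer ℝ (n - i)).eval (1 + (n : ℝ)) *
        (ascPochhammer ℝ i).eval (1 / 2 - (n : ℝ))) /
        ((n - k).factorial * (k - i).factorial * i.factorial) := by
  obtain ⟨a, rfl⟩ : ∃ a, k = i + a := ⟨k - i, by omega⟩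
  obtain ⟨b, rfl⟩ : ∃ b, n = i + a + b := ⟨n - (i + a), by omega⟩
  have hreflect : (ascPochhammer ℝ i).eval (1 / 2 - ((i + a + b : ℕ) : ℝ)) =
      (-1) ^ i * (ascPochhammer ℝ i).eval (-(1 / 2) + ((a + b : ℕ) : ℝ) + 1) := by
    rw [show 1 / 2 - ((i + a + b : ℕ) : ℝ) = -(((i + a + b : ℕ) : ℝ) - 1 / 2) by ring,
      ascPochhammer_eval_neg_eq_descPochhammer, descPochhammer_eval_eq_ascPochhammer]
    push_cast
    ring_nf
  have hsign : (-1 : ℝ) ^ i * (-1) ^ i = 1 := by rw [← pow_add, Even.neg_one_pow ⟨i, rfl⟩]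
  rw [hreflect, mul_left_comm _ ((-1) ^ i), ← mul_assoc, hsign, one_mul, jacobiCoeff,
    Nat.cast_choose ℝ (by omega : i + a + b - (i + a) ≤ i + a + b - i),
    show i + a + b - i = a + b by omega, show i + a + b - (i + a) = b by omega,
    show a + b - b = a by omega, show i + a + b - (a + b) = i by omega, Nat.add_sub_cancel_left,
    show ((i + a + b : ℕ) : ℝ) + -(1 / 2) + 1 / 2 + 1 = 1 + ((i + a + b : ℕ) : ℝ) by ring]
  field_simp

theorem shifted_chebV_in_monomials (n : ℕ) :
    (chebV n).comp (2 * X - 1) =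
      ∑ k ∈ range (n + 1),
        C ((-1 : ℝ) ^ k * (2 : ℝ) ^ (2 * n - k) / (((2 * n).choose n : ℝ) * (n - k).factorial) *
           ∑ v ∈ range (k + 1), ∑ l ∈ range (v + 1),
             2 ^ l * ((ascPochhammer ℝ (n - l)).eval (1 + (n : ℝ)) *
                      (ascPochhammer ℝ l).eval (1 / 2 - (n : ℝ))) /
             ((k - v).factorial * (v - l).factorial * l.factorial)) * X ^ (n - k) := by
  have hV : (chebV n).comp (2 * X - 1) = C ((2 : ℝ) ^ (2 * n) / ((2 * n).choose n : ℝ)) *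
      ∑ l ∈ range (n + 1), C (jacobiCoeff (-(1 / 2)) (1 / 2) n l) * (X - 1) ^ l := by
    rw [chebV, mul_comp, C_comp, jacobiP_comp_two_mul_X_sub_one]
  have hdeg : ((chebV n).comp (2 * X - 1)).natDegree ≤ n :=
    hV ▸ (natDegree_C_mul_le _ _).trans (natDegree_sum_range_C_mul_X_sub_one_pow_le _ n)
  rw [as_sum_range_C_coeff_sub_mul_X_pow_sub _ hdeg]
  refine sum_congr rfl fun k hk => ?_
  have hkn := mem_range_succ_iff.mp hk
  rw [hV, coeff_C_mul, coeff_sum_range_C_mul_X_sub_one_pow _ hkn,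
    sum_range_sum_range_div_factorial_mul_factorial_mul_factorial, mul_sum, mul_sum]
  congr 2
  refine sum_congr rfl fun i hi => ?_
  have hik := mem_range_succ_iff.mp hi
  rw [mul_assoc, choose_mul_jacobiCoeff_neg_half_half hik hkn]
  have hsign : (-1 : ℝ) ^ (k - i) * (-1) ^ i = (-1) ^ k := by
    rw [← pow_add, Nat.sub_add_cancel hik]
  have htwo : (2 : ℝ) ^ (2 * n - k) * 2 ^ i * 2 ^ (k - i) = 2 ^ (2 * n) := by
    rw [← pow_add, ← pow_add]
    congr 1
    omega
  rw [← hsign, ← htwo]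
  ring
end

section
/- For every natural number $n$, the identity of polynomials $x^n = \sum_{k=0}^{n} \alpha_3(n,k)\, T_{n-k}(2x-1)$ holds in $\mathbb{R}[x]$, where for $0 \leq k < n$, $\alpha_3(n,k) = 2^{1-2n} \sum_{0 \leq v \leq k,\; k-v \text{ even}} \binom{n-v}{(k-v)/2} \binom{n}{v}\, 2^{v}$, and for $k = n$, $\alpha_3(n,n) = 2^{-2n} \sum_{0 \leq v \leq n,\; n-v \text{ even}} \binom{n-v}{(n-v)/2} \binom{n}{v}\, 2^{v}$. -/
open Polynomial Finset

/-!
Put `y = 2x - 1`. Then `4ⁿ xⁿ = (2 + 2y)ⁿ = ∑ᵥ C(n,v) 2ᵛ (2y)ⁿ⁻ᵛ`, and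
`(2y)ᵖ = ∑ᵢ C(p,i) T_{p-2i}(y)` is the Chebyshev form of `(z + z⁻¹)ᵖ = ∑ᵢ C(p,i) zᵖ⁻²ⁱ`.
As `T` is even, the summands `i` and `p - i` agree; grouping the pairs `(v, i)` with `2i ≤ p`
by `k = v + 2i` yields `T_{n-k}(y)`, and each `k < n` is reached a second time from the
reflected half `2i > p`, while `k = n` (i.e. `2i = p`) is not. This is why the coefficient
of `T_0(y)` carries the extra factor `1/2`.
-/

section Reindexing

variable {M : Type*} [AddCommMonoid M]

theorem sum_range_succ_eq_sum_filter_add_sum_filter_of_symm {f : ℕ → M} {p : ℕ}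
    (hf : ∀ i ≤ p, f (p - i) = f i) :
    ∑ i ∈ range (p + 1), f i =
      ∑ i ∈ (range (p + 1)).filter (fun i => 2 * i < p + 1), f i +
        ∑ i ∈ (range (p + 1)).filter (fun i => 2 * i < p), f i := by
  rw [← sum_filter_add_sum_filter_not _ (fun i => 2 * i < p + 1)]
  congr 1
  rw [sum_filter, sum_filter, ← sum_range_reflect]
  refine sum_congr rfl fun i hi => ?_
  have hi : i ≤ p := Nat.lt_succ_iff.1 (mem_range.1 hi)
  rw [Nat.add_sub_cancel, hf i hi]
  exact if_congr (by omega) rfl rfl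

/-- By truncated subtraction, `2 * i < K - v` says exactly `v + 2 * i < K`. -/
theorem sum_sum_filter_two_mul_lt_eq_sum_parity (h : ℕ → ℕ → M) {n K : ℕ} (hK : K ≤ n + 1) :
    ∑ v ∈ range (n + 1), ∑ i ∈ (range (n - v + 1)).filter (fun i => 2 * i < K - v), h v i =
      ∑ k ∈ range K, ∑ v ∈ (range (k + 1)).filter (fun v => (k - v) % 2 = 0),
        h v ((k - v) / 2) := by
  rw [sum_sigma', sum_sigma']
  refine sum_nbij' (fun x => ⟨x.1 + 2 * x.2, x.1⟩) (fun y => ⟨y.2, (y.1 - y.2) / 2⟩)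
    ?_ ?_ ?_ ?_ ?_ <;> rintro ⟨a, b⟩ hab <;>
    simp only [mem_sigma, mem_filter, mem_range, Sigma.mk.injEq, heq_eq_eq, true_and, and_true]
      at hab ⊢
  all_goals first | omega | (congr 1; omega)

theorem sum_triangle_eq_of_symm {h : ℕ → ℕ → M} {n : ℕ}
    (hsymm : ∀ v ≤ n, ∀ i ≤ n - v, h v (n - v - i) = h v i) :
    ∑ v ∈ range (n + 1), ∑ i ∈ range (n - v + 1), h v i =
      ∑ k ∈ range (n + 1), ∑ v ∈ (range (k + 1)).filter (fun v => (k - v) % 2 = 0),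
          h v ((k - v) / 2) +
        ∑ k ∈ range n, ∑ v ∈ (range (k + 1)).filter (fun v => (k - v) % 2 = 0),
          h v ((k - v) / 2) := by
  rw [← sum_sum_filter_two_mul_lt_eq_sum_parity h le_rfl,
    ← sum_sum_filter_two_mul_lt_eq_sum_parity h n.le_succ, ← sum_add_distrib]
  refine sum_congr rfl fun v hv => ?_
  have hv : v ≤ n := Nat.lt_succ_iff.1 (mem_range.1 hv)
  rw [Nat.sub_add_comm hv]
  exact sum_range_succ_eq_sum_filter_add_sum_filter_of_symm (hsymm v hv)

end Reindexing

namespace Polynomial.Chebyshev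

variable {R : Type*} [CommRing R]

theorem two_mul_X_pow_eq_sum_antidiagonal_T (m : ℕ) :
    (2 * X : R[X]) ^ m = ∑ ij ∈ antidiagonal m, (m.choose ij.1 : R[X]) * T R (ij.2 - ij.1) := by
  induction m with
  | zero => simp
  | succ m ih =>
    rw [sum_antidiagonal_choose_succ_mul (fun i j => T R ((j : ℤ) - i)), pow_succ', ih, mul_sum,
      ← sum_add_distrib]
    refine sum_congr rfl fun ij hij => ?_
    rw [← Nat.choose_symm_of_eq_add (mem_antidiagonal.1 hij).symm, ← mul_add, mul_left_comm]
    push_cast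
    rw [show (ij.2 : ℤ) + 1 - ij.1 = ij.2 - ij.1 + 1 by ring,
      show (ij.2 : ℤ) - (ij.1 + 1) = ij.2 - ij.1 - 1 by ring, T_add_one]
    ring

theorem four_pow_mul_X_pow_eq_sum_sum_T_comp (n : ℕ) :
    (4 ^ n * X ^ n : R[X]) =
      ∑ v ∈ range (n + 1), ∑ i ∈ range (n - v + 1),
        (n.choose v * (n - v).choose i * 2 ^ v : R[X]) *
          (T R ((n - v - i : ℕ) - i)).comp (2 * X - 1) := by
  rw [← mul_pow, show (4 * X : R[X]) = 2 + 2 * (2 * X - 1) by ring, add_pow]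
  refine sum_congr rfl fun v _ => ?_
  rw [show (2 * (2 * X - 1) : R[X]) = (2 * X).comp (2 * X - 1) by simp, ← pow_comp,
    two_mul_X_pow_eq_sum_antidiagonal_T, Nat.sum_antidiagonal_eq_sum_range_succ_mk, sum_comp,
    mul_sum, sum_mul]
  refine sum_congr rfl fun i _ => ?_
  simp only [mul_comp, natCast_comp]
  ring

theorem four_pow_mul_X_pow_eq_sum_T_comp (n : ℕ) :
    (4 ^ n * X ^ n : R[X]) =
      ∑ k ∈ range (n + 1),
        Polynomial.C ((if k < n then 2 else 1) *
            ∑ v ∈ (range (k + 1)).filter (fun v => (k - v) % 2 = 0),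
              ((n - v).choose ((k - v) / 2) : R) * n.choose v * 2 ^ v) *
          (T R (n - k : ℕ)).comp (2 * X - 1) := by
  rw [four_pow_mul_X_pow_eq_sum_sum_T_comp, sum_triangle_eq_of_symm]
  · have hgroup : ∀ k ≤ n, ∑ v ∈ (range (k + 1)).filter (fun v => (k - v) % 2 = 0),
          (n.choose v * (n - v).choose ((k - v) / 2) * 2 ^ v : R[X]) *
            (T R ((n - v - (k - v) / 2 : ℕ) - ((k - v) / 2 : ℕ))).comp (2 * X - 1) =
        Polynomial.C (∑ v ∈ (range (k + 1)).filter (fun v => (k - v) % 2 = 0),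
            ((n - v).choose ((k - v) / 2) : R) * n.choose v * 2 ^ v) *
          (T R (n - k : ℕ)).comp (2 * X - 1) := by
      intro k hk
      rw [map_sum, sum_mul]
      refine sum_congr rfl fun v hv => ?_
      simp only [mem_filter, mem_range] at hv
      rw [show ((n - v - (k - v) / 2 : ℕ) : ℤ) - ((k - v) / 2 : ℕ) = (n - k : ℕ) by omega]
      simp only [map_mul, map_natCast, map_pow, map_ofNat]
      ring
    rw [sum_range_succ, sum_range_succ _ n, if_neg n.lt_irrefl, one_mul, add_right_comm,
      ← sum_add_distrib, hgroup n le_rfl]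
    congr 1
    refine sum_congr rfl fun k hk => ?_
    rw [if_pos (mem_range.1 hk), hgroup k (mem_range.1 hk).le, ← add_mul, ← map_add, ← two_mul]
  · intro v hv i hi
    rw [Nat.choose_symm hi, ← T_neg]
    congr 4
    omega

end Polynomial.Chebyshev

theorem monomial_in_shifted_chebT (n : ℕ) :
    (X : ℝ[X]) ^ n =
      ∑ k ∈ range (n + 1),
        C (if k < n then
             (2 : ℝ) ^ (1 - 2 * (n : ℤ)) *
               ∑ v ∈ (range (k + 1)).filter (fun v => (k - v) % 2 = 0),
                 ((n - v).choose ((k - v) / 2) : ℝ) * (n.choose v : ℝ) * 2 ^ v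
           else
             (2 : ℝ) ^ (-(2 * (n : ℤ))) *
               ∑ v ∈ (range (k + 1)).filter (fun v => (k - v) % 2 = 0),
                 ((n - v).choose ((k - v) / 2) : ℝ) * (n.choose v : ℝ) * 2 ^ v) *
        (Polynomial.Chebyshev.T ℝ ((n - k : ℕ) : ℤ)).comp (2 * X - 1) := by
  have h4 : (4 : ℝ) ^ n = 2 ^ (2 * (n : ℤ)) := by norm_num [zpow_mul]
  refine mul_left_cancel₀ (pow_ne_zero n (by norm_num : (4 : ℝ[X]) ≠ 0)) ?_
  rw [Chebyshev.four_pow_mul_X_pow_eq_sum_T_comp, mul_sum]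
  refine sum_congr rfl fun k _ => ?_
  rw [← mul_assoc, ← map_ofNat C 4, ← C_pow, ← C_mul]
  congr 2
  split_ifs <;> rw [← mul_assoc, h4, ← zpow_add₀ two_ne_zero] <;> norm_num
end

section
/- For every natural number $n$, the identity of polynomials $x^n = \sum_{k=0}^{n} \Big( 2^{-2n}\,(1+n-k)\, n! \sum_{0 \leq v \leq k,\; k-v \text{ even}} \frac{2^{v}}{(2)_{\,n - (v+k)/2}\; v!\; ((k-v)/2)!} \Big) U_{n-k}(2x-1)$ holds in $\mathbb{R}[x]$. -/
/-!
Since `4X = 2 + 2(2X - 1)`, the three-term recurrence gives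
`4X · U*_j = U*_{j+1} + 2 U*_j + U*_{j-1}` for every `j ∈ ℤ`, so multiplying by `4X` convolves the
coefficients with `(1, 2, 1)` and `(4X)^n = ∑_{i ≤ 2n} C(2n, i) U*_{n-i}`. Folding this sum with
`U*_{-1} = 0` and `U*_{-j-2} = -U*_j` leaves `C(2n, k) - C(2n, 2n+2-k)` as the coefficient of
`U*_{n-k}`.

In the statement, `(n+1)!` times the inner sum over `v` is the coefficient of `X^k` in
`((1 + X²) + 2X)^(n+1) = (1 + X)^(2n+2)`, with `v` counting the factors `2X`; so that sum is
`C(2n+2, k) / (n+1)!`. The two descriptions agree because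
`(n+1-k) C(2n+2, k) = (n+1) (C(2n, k) - C(2n, 2n+2-k))`.
-/

open Polynomial Finset

theorem Finset.sum_range_choose_succ_nsmul {M : Type*} [AddCommMonoid M] (f : ℤ → M) (m : ℤ)
    (N : ℕ) :
    ∑ i ∈ range (N + 2), (N + 1).choose i • f (m - i) =
      ∑ i ∈ range (N + 1), N.choose i • (f (m - i) + f (m - i - 1)) := by
  simp_rw [sum_choose_succ_nsmul (fun i _ => f (m - i)) N, smul_add, sum_add_distrib]
  push_cast [sub_sub]
  rfl

theorem Finset.sum_range_smul_eq_sum_sub_reflect_smul {M : Type*} [AddCommGroup M] (c : ℕ → ℤ)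
    (f : ℤ → M) (hf₁ : f (-1) = 0) (hf₂ : ∀ j, f (-j - 2) = -f j) (n : ℕ) :
    ∑ i ∈ range (2 * n + 3), c i • f (n - i) =
      ∑ k ∈ range (n + 1), (c k - c (2 * n + 2 - k)) • f (n - k) := by
  have hreflect : ∑ i ∈ range (n + 1), c (n + 1 + (i + 1)) • f (n - ↑(n + 1 + (i + 1))) =
      -∑ k ∈ range (n + 1), c (2 * n + 2 - k) • f (n - k) := by
    rw [← sum_range_reflect, ← sum_neg_distrib]
    refine sum_congr rfl fun k hk => ?_
    have hkn : k ≤ n := Nat.lt_succ_iff.mp (mem_range.mp hk)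
    rw [show n + 1 + (n + 1 - 1 - k + 1) = 2 * n + 2 - k by omega, ← smul_neg, ← hf₂]
    congr 2
    push_cast [Nat.cast_sub (show k ≤ 2 * n + 2 by omega)]
    ring
  rw [show 2 * n + 3 = (n + 1) + (n + 1 + 1) by ring, sum_range_add,
    sum_range_succ' (fun i => c (n + 1 + i) • f (n - ↑(n + 1 + i))), hreflect]
  simp [hf₁, sub_smul, sum_sub_distrib, ← sub_eq_add_neg]

theorem Nat.sum_choose_mul_choose_mul_two_pow (N k : ℕ) :
    ∑ v ∈ (range (k + 1)).filter (fun v => (k - v) % 2 = 0),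
      N.choose v * (N - v).choose ((k - v) / 2) * 2 ^ v = (2 * N).choose k := by
  have hexpand : (1 + X : ℕ[X]) ^ (2 * N) =
      ∑ v ∈ range (N + 1), (N.choose v * 2 ^ v) • (X ^ v * expand ℕ 2 ((1 + X) ^ (N - v))) := by
    rw [pow_mul, show (1 + X : ℕ[X]) ^ 2 = 2 * X + expand ℕ 2 (1 + X) by simp; ring, add_pow]
    refine sum_congr rfl fun v _ => ?_
    rw [nsmul_eq_mul, map_pow]
    push_cast
    ring
  have hcoeff := congrArg (coeff · k) hexpand
  simp only [coeff_one_add_X_pow, finsetSum_coeff, coeff_smul, coeff_X_pow_mul',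
    coeff_expand two_pos, Nat.cast_id, smul_eq_mul] at hcoeff
  rw [hcoeff, sum_filter]
  set F : ℕ → ℕ := fun v =>
    N.choose v * 2 ^ v * if v ≤ k then if 2 ∣ k - v then (N - v).choose ((k - v) / 2) else 0 else 0
  calc _ = ∑ v ∈ range (k + 1), F v := by
        refine sum_congr rfl fun v hv => ?_
        simp only [F, if_pos (Nat.lt_succ_iff.mp (mem_range.mp hv)), Nat.dvd_iff_mod_eq_zero]
        split_ifs <;> ring
    _ = ∑ v ∈ range (N + k + 1), F v :=
        sum_subset (range_subset_range.mpr (by omega)) fun v _ hv => by simp_all [F]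
    _ = ∑ v ∈ range (N + 1), F v :=
        (sum_subset (range_subset_range.mpr (by omega)) fun v _ hv => by
          simp_all [F, Nat.choose_eq_zero_of_lt]).symm

theorem Nat.sub_mul_choose_two_mul_add_two (n k : ℕ) (hk : k ≤ 2 * n + 2) :
    ((n : ℤ) + 1 - k) * (2 * n + 2).choose k =
      (n + 1) * ((2 * n).choose k - (2 * n).choose (2 * n + 2 - k)) := by
  rcases k with _ | _ | j
  · simp [Nat.choose_eq_zero_of_lt (by omega : 2 * n < 2 * n + 2)]
  · simp
    ring
  · have hsymm : (2 * n).choose (2 * n + 2 - (j + 1 + 1)) = (2 * n).choose j := by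
      rw [show 2 * n + 2 - (j + 1 + 1) = 2 * n - j by omega, Nat.choose_symm (by omega)]
    have habsorb : ((2 * n + 2 : ℕ) : ℤ) * (2 * n + 1).choose (j + 1) =
        (2 * n + 2).choose (j + 1 + 1) * (j + 1 + 1 : ℕ) := by
      exact_mod_cast Nat.add_one_mul_choose_eq (2 * n + 1) (j + 1)
    rw [hsymm]
    rw [show 2 * n + 2 = 2 * n + 1 + 1 by ring, Nat.choose_succ_succ' (2 * n + 1),
      Nat.choose_succ_succ' (2 * n), Nat.choose_succ_succ' (2 * n) (j + 1)] at habsorb ⊢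
    push_cast at habsorb ⊢
    linear_combination habsorb

namespace Polynomial.Chebyshev

variable (R : Type*) [CommRing R]

noncomputable def shiftedU (n : ℤ) : R[X] := (U R n).comp (2 * X - 1)

@[simp]
theorem shiftedU_zero : shiftedU R 0 = 1 := by simp [shiftedU]

theorem shiftedU_neg_one : shiftedU R (-1) = 0 := by simp [shiftedU]

theorem shiftedU_neg_sub_two (n : ℤ) : shiftedU R (-n - 2) = -shiftedU R n := by
  simp [shiftedU, U_neg_sub_two]

theorem four_mul_X_mul_shiftedU (n : ℤ) :
    4 * X * shiftedU R n = shiftedU R (n + 1) + 2 * shiftedU R n + shiftedU R (n - 1) := by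
  simp only [shiftedU, U_add_one R n, sub_comp, mul_comp, ofNat_comp, X_comp]
  ring

theorem four_mul_X_pow_eq_sum_choose_smul_shiftedU (n : ℕ) :
    (4 * X : R[X]) ^ n = ∑ i ∈ range (2 * n + 1), (2 * n).choose i • shiftedU R (n - i) := by
  induction n with
  | zero => simp
  | succ n ih =>
    rw [show 2 * (n + 1) + 1 = 2 * n + 1 + 2 by ring, show 2 * (n + 1) = 2 * n + 1 + 1 by ring,
      sum_range_choose_succ_nsmul, show 2 * n + 1 + 1 = 2 * n + 2 from rfl,
      sum_range_choose_succ_nsmul (fun j => shiftedU R j + shiftedU R (j - 1)), pow_succ', ih,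
      mul_sum]
    refine sum_congr rfl fun i _ => ?_
    rw [mul_smul_comm, four_mul_X_mul_shiftedU]
    push_cast
    ring_nf

theorem four_mul_X_pow_eq_sum_sub_choose_smul_shiftedU (n : ℕ) :
    (4 * X : R[X]) ^ n = ∑ k ∈ range (n + 1),
      (((2 * n).choose k : ℤ) - (2 * n).choose (2 * n + 2 - k)) • shiftedU R (n - k) := by
  rw [four_mul_X_pow_eq_sum_choose_smul_shiftedU, ← sum_range_smul_eq_sum_sub_reflect_smul _ _
    (shiftedU_neg_one R) (shiftedU_neg_sub_two R), sum_range_succ _ (2 * n + 2),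
    sum_range_succ _ (2 * n + 1)]
  simp [Nat.choose_eq_zero_of_lt]

end Polynomial.Chebyshev

open Nat in
theorem ascPochhammer_eval_two (S : Type*) [Semiring S] (s : ℕ) :
    (ascPochhammer S s).eval 2 = ((s + 1)! : S) := by
  have h := factorial_mul_ascFactorial 1 s
  rw [factorial_one, one_mul, add_comm 1 s] at h
  simpa [h] using ascPochhammer_nat_eq_natCast_ascFactorial S 2 s

open Nat in
theorem sum_two_pow_div_ascPochhammer_eval_two (K : Type*) [Field K] [CharZero K] {n k : ℕ}
    (hk : k ≤ n) :
    ∑ v ∈ (range (k + 1)).filter (fun v => (k - v) % 2 = 0),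
      (2 : K) ^ v / ((ascPochhammer K (n - (v + k) / 2)).eval 2 * v ! * ((k - v) / 2)!) =
      (2 * n + 2).choose k / (n + 1)! := by
  rw [show 2 * n + 2 = 2 * (n + 1) by ring, ← Nat.sum_choose_mul_choose_mul_two_pow, Nat.cast_sum,
    sum_div]
  refine sum_congr rfl fun v hv => ?_
  simp only [mem_filter, mem_range] at hv
  have hsub : n + 1 - v - (k - v) / 2 = n - (v + k) / 2 + 1 := by omega
  rw [ascPochhammer_eval_two, Nat.cast_mul, Nat.cast_mul, Nat.cast_choose K (by omega : v ≤ n + 1),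
    Nat.cast_choose K (by omega : (k - v) / 2 ≤ n + 1 - v), hsub]
  have h₁ : ((n + 1 - v)! : K) ≠ 0 := Nat.cast_ne_zero.mpr (factorial_ne_zero _)
  have h₂ : ((n + 1)! : K) ≠ 0 := Nat.cast_ne_zero.mpr (factorial_ne_zero _)
  field_simp
  push_cast
  ring

theorem monomial_in_shifted_chebU (n : ℕ) :
    (X : ℝ[X]) ^ n =
      ∑ k ∈ range (n + 1),
        C ((2 : ℝ) ^ (-(2 * (n : ℤ))) * (1 + (n : ℝ) - k) * n.factorial *
           ∑ v ∈ (range (k + 1)).filter (fun v => (k - v) % 2 = 0),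
             (2 : ℝ) ^ v /
               ((ascPochhammer ℝ (n - (v + k) / 2)).eval (2 : ℝ) *
                v.factorial * ((k - v) / 2).factorial)) *
        (Polynomial.Chebyshev.U ℝ ((n - k : ℕ) : ℤ)).comp (2 * X - 1) := by
  have hX : (X : ℝ[X]) ^ n = C ((4 : ℝ) ^ n)⁻¹ * (4 * X) ^ n := by
    rw [mul_pow, ← mul_assoc, show (4 : ℝ[X]) ^ n = C (4 ^ n) by rw [C_pow, map_ofNat], ← C_mul,
      inv_mul_cancel₀ (by positivity), C_1, one_mul]
  rw [hX, Chebyshev.four_mul_X_pow_eq_sum_sub_choose_smul_shiftedU, mul_sum]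
  refine sum_congr rfl fun k hk => ?_
  have hkn : k ≤ n := Nat.lt_succ_iff.mp (mem_range.mp hk)
  rw [sum_two_pow_div_ascPochhammer_eval_two ℝ hkn, Nat.cast_sub hkn, ← Int.cast_smul_eq_zsmul ℝ,
    smul_eq_C_mul, ← mul_assoc, ← C_mul]
  congr 2
  have hchoose : ((n : ℝ) + 1 - k) * (2 * n + 2).choose k =
      (n + 1) * ((2 * n).choose k - (2 * n).choose (2 * n + 2 - k)) := by
    exact_mod_cast Nat.sub_mul_choose_two_mul_add_two n k (by omega)
  rw [zpow_neg, zpow_mul, show (2 : ℝ) ^ (2 : ℤ) = 4 by norm_num, zpow_natCast,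
    Nat.factorial_succ]
  push_cast
  field_simp
  linear_combination -hchoose
end
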